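/- arXiv:0710.0065 — 3 statements merged into one kernel-verified Lean document; each statement's English description precedes it below -/
import Mathlib

section
/- An element ∑_g r_g g̅ of the crossed product A ⋊_α^σ G lies in the center Z(A ⋊_α^σ G) if and only if for all a ∈ A and all (s,t) ∈ G × G: r_s σ_s(a) = a r_s, and r_{ts⁻¹} α(ts⁻¹, s) = σ_s(r_{s⁻¹t}) α(s, s⁻¹t). -/
/-- A `G`-crossed system `{A, G, σ, α}`: a unital ring `A`, a group `G`,
`σ : G → Aut(A)` and a `σ`-cocycle `α : G × G → U(A)` satisfying the
crossed-system axioms (i)-(iii). -/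
structure CrossedSystem (A : Type*) [Ring A] (G : Type*) [Group G] where
  σ : G → RingAut A
  α : G → G → Aˣ
  compat : ∀ x y : G, ∀ a : A,
    σ x (σ y a) = (α x y : A) * σ (x * y) a * ((α x y)⁻¹ : Aˣ)
  cocycle : ∀ x y z : G,
    (α x y : A) * (α (x * y) z : A) = σ x (α y z : A) * (α x (y * z) : A)
  unit_right : ∀ x : G, α x 1 = 1
  unit_left : ∀ x : G, α 1 x = 1

variable {A : Type*} [Ring A] {G : Type*} [Group G]

/-- Multiplication of the crossed product `A ⋊_α^σ G`, realized on the free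
left `A`-module `G →₀ A`: `(a x̄)(b ȳ) = a σ_x(b) α(x,y) (x*y)‾`. -/
noncomputable def cmul (C : CrossedSystem A G) (f g : G →₀ A) : G →₀ A :=
  f.sum fun s a => g.sum fun t b =>
    Finsupp.single (s * t) (a * C.σ s b * (C.α s t : A))

/-- The element `1_A ē` of the crossed product. -/
noncomputable def cone : G →₀ A := Finsupp.single 1 1

/-- The canonical embedding `ι : A → A ⋊_α^σ G`, `a ↦ a ē`; its range is `Ã`. -/
noncomputable def cemb (a : A) : G →₀ A := Finsupp.single 1 a

/-- The commutant `Comm(Ã)` of the embedded base ring in the crossed product. -/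
noncomputable def cCommutant (C : CrossedSystem A G) : Set (G →₀ A) :=
  {x | ∀ a : A, cmul C (cemb a) x = cmul C x (cemb a)}

/-- `I` is a (non-unital) two-sided ideal of the crossed product `A ⋊_α^σ G`. -/
def cIsIdeal (C : CrossedSystem A G) (I : Set (G →₀ A)) : Prop :=
  0 ∈ I ∧ (∀ x ∈ I, ∀ y ∈ I, x + y ∈ I) ∧ (∀ x ∈ I, -x ∈ I) ∧
    (∀ x ∈ I, ∀ y : G →₀ A, cmul C y x ∈ I ∧ cmul C x y ∈ I)

/-! Multiplication is biadditive, so `r` is central iff it commutes with every monomial `b s̄`.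
Comparing `g`-coefficients, `r (b s̄) = (b s̄) r` reads
`r_{gs⁻¹} σ_{gs⁻¹}(b) α(gs⁻¹, s) = b σ_s(r_{s⁻¹g}) α(s, s⁻¹g)` for all `g`. Taking `s = 1`
(where `σ_1 = id` and `α` is normalised) gives the first condition, taking `b = 1` the second, and
conversely the two conditions rewrite the left side into the right one. -/

namespace CrossedSystem

theorem σ_one_apply (C : CrossedSystem A G) (a : A) : C.σ 1 a = a := by
  apply (C.σ 1).injective
  simpa [C.unit_left] using C.compat 1 1 a

end CrossedSystem

section CrossedProduct

variable (C : CrossedSystem A G)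

theorem cmul_eq_sum_cmul_single_left (f g : G →₀ A) :
    cmul C f g = f.sum fun s a => cmul C (Finsupp.single s a) g := by
  unfold cmul
  refine Finsupp.sum_congr fun s _ => ?_
  rw [Finsupp.sum_single_index]
  simp only [zero_mul, Finsupp.single_zero, Finsupp.sum_fun_zero]

theorem cmul_eq_sum_cmul_single_right (f g : G →₀ A) :
    cmul C f g = g.sum fun t b => cmul C f (Finsupp.single t b) := by
  unfold cmul
  rw [Finsupp.sum_comm]
  refine Finsupp.sum_congr fun t _ => Finsupp.sum_congr fun s _ => ?_
  rw [Finsupp.sum_single_index]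
  simp only [map_zero, mul_zero, zero_mul, Finsupp.single_zero]

theorem cmul_single_left_apply (r : G →₀ A) (s : G) (b : A) (g : G) :
    cmul C (Finsupp.single s b) r g
      = b * C.σ s (r (s⁻¹ * g)) * (C.α s (s⁻¹ * g) : A) := by
  classical
  unfold cmul
  rw [Finsupp.sum_single_index (by simp), Finsupp.sum_apply,
     Finsupp.sum_eq_single (s⁻¹ * g)]
  · simp
  · intro t _ ht
    rw [Finsupp.single_apply, if_neg]
    rintro rfl
    exact ht (by group)
  · simp

theorem cmul_single_right_apply (r : G →₀ A) (s : G) (b : A) (g : G) :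
    cmul C r (Finsupp.single s b) g
      = r (g * s⁻¹) * C.σ (g * s⁻¹) b * (C.α (g * s⁻¹) s : A) := by
  classical
  unfold cmul
  rw [Finsupp.sum_apply, Finsupp.sum_eq_single (g * s⁻¹)]
  · simp
  · intro u _ hu
    rw [Finsupp.sum_single_index (by simp), Finsupp.single_apply, if_neg]
    rintro rfl
    exact hu (by group)
  · simp

theorem cmul_comm_of_cmul_single_comm {r : G →₀ A}
    (h : ∀ s b, cmul C r (Finsupp.single s b) = cmul C (Finsupp.single s b) r)
    (x : G →₀ A) : cmul C r x = cmul C x r := by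
  rw [cmul_eq_sum_cmul_single_right, cmul_eq_sum_cmul_single_left]
  exact Finsupp.sum_congr fun s _ => h s (x s)

end CrossedProduct

theorem stmt_4 (C : CrossedSystem A G) (r : G →₀ A) :
    (∀ x : G →₀ A, cmul C r x = cmul C x r) ↔
      (∀ s : G, ∀ a : A, r s * C.σ s a = a * r s) ∧
      (∀ s t : G, r (t * s⁻¹) * (C.α (t * s⁻¹) s : A)
          = C.σ s (r (s⁻¹ * t)) * (C.α s (s⁻¹ * t) : A)) := by
  constructor
  · intro h
    refine ⟨fun s a => ?_, fun s t => ?_⟩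
    · have hs := DFunLike.congr_fun (h (Finsupp.single 1 a)) s
      rw [cmul_single_right_apply, cmul_single_left_apply] at hs
      simpa [C.unit_right, C.unit_left, C.σ_one_apply] using hs
    · have ht := DFunLike.congr_fun (h (Finsupp.single s 1)) t
      rw [cmul_single_right_apply, cmul_single_left_apply] at ht
      simpa using ht
  · rintro ⟨h_base, h_coeff⟩
    refine cmul_comm_of_cmul_single_comm C fun s b => Finsupp.ext fun g => ?_
    rw [cmul_single_right_apply, cmul_single_left_apply]
    calc r (g * s⁻¹) * C.σ (g * s⁻¹) b * (C.α (g * s⁻¹) s : A)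
        = b * (r (g * s⁻¹) * (C.α (g * s⁻¹) s : A)) := by rw [h_base, mul_assoc]
      _ = b * C.σ s (r (s⁻¹ * g)) * (C.α s (s⁻¹ * g) : A) := by rw [h_coeff, mul_assoc]
end

section
/- Suppose σ_g = id_A for all g ∈ G (twisted group ring case). Then the center of A ⋊_α^σ G consists of those ∑_g r_g g̅ with each r_s ∈ Z(A) and r_{ts⁻¹} α(ts⁻¹,s) = r_{s⁻¹t} α(s,s⁻¹t) for all s,t ∈ G. -/
variable {A : Type*} [Ring A] {G : Type*} [Group G]

/-! Both products of `r` with a monomial `b t̄` can be read off coefficientwise; for trivial `σ`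
they agree iff `r (g t⁻¹) b α(g t⁻¹, t) = b r (t⁻¹ g) α(t, t⁻¹ g)` for every `g`. Since `α` is
normalized, `t = 1` says that the coefficients of `r` are central and `b = 1` is the cocycle
condition; conversely the two conditions give the identity for all `b` and `t`. By
biadditivity, commuting with every monomial is commuting with everything. -/

theorem Finsupp.sum_single_equiv_apply {α β M N : Type*} [Zero M] [AddCommMonoid N]
    (f : α →₀ M) (e : α ≃ β) (c : α → M → N) (hc : ∀ x, c x 0 = 0) (y : β) :
    (f.sum fun x m => single (e x) (c x m)) y = c (e.symm y) (f (e.symm y)) := by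
  classical
  simp only [Finsupp.sum_apply, single_apply, ← e.eq_symm_apply, Finsupp.sum_ite_eq']
  split_ifs with h
  · rfl
  · rw [notMem_support_iff.mp h, hc]

namespace CrossedSystem

variable (C : CrossedSystem A G)

theorem cmul_single_right_apply (f : G →₀ A) (t : G) (b : A) (g : G) :
    cmul C f (Finsupp.single t b) g
      = f (g * t⁻¹) * C.σ (g * t⁻¹) b * (C.α (g * t⁻¹) t : A) := by
  simp only [cmul, Finsupp.sum_single_index, map_zero, mul_zero, zero_mul, Finsupp.single_zero]
  exact Finsupp.sum_single_equiv_apply f (Equiv.mulRight t) _ (by simp) g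

theorem cmul_single_left_apply (f : G →₀ A) (t : G) (b : A) (g : G) :
    cmul C (Finsupp.single t b) f g
      = b * C.σ t (f (t⁻¹ * g)) * (C.α t (t⁻¹ * g) : A) := by
  rw [cmul, Finsupp.sum_single_index (by simp)]
  exact Finsupp.sum_single_equiv_apply f (Equiv.mulLeft t) _ (by simp) g

theorem cmul_add_left (x y f : G →₀ A) : cmul C (x + y) f = cmul C x f + cmul C y f := by
  unfold cmul
  rw [Finsupp.sum_add_index'] <;> intros <;> simp [add_mul, Finsupp.sum_add]

theorem cmul_add_right (f x y : G →₀ A) : cmul C f (x + y) = cmul C f x + cmul C f y := by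
  unfold cmul
  rw [← Finsupp.sum_add]
  refine Finsupp.sum_congr fun s _ => ?_
  rw [Finsupp.sum_add_index'] <;> intros <;> simp [mul_add, add_mul]

theorem cmul_comm_iff_forall_single (r : G →₀ A) :
    (∀ x, cmul C r x = cmul C x r) ↔
      ∀ t b, cmul C r (Finsupp.single t b) = cmul C (Finsupp.single t b) r := by
  refine ⟨fun h t b => h _, fun h x => ?_⟩
  induction x using Finsupp.induction with
  | zero => simp [cmul]
  | single_add t b f _ _ ih => rw [cmul_add_left, cmul_add_right, ih, h]

end CrossedSystem

theorem stmt_5 (C : CrossedSystem A G)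
    (hσ : ∀ g : G, C.σ g = RingEquiv.refl A) (r : G →₀ A) :
    (∀ x : G →₀ A, cmul C r x = cmul C x r) ↔
      (∀ s : G, ∀ a : A, r s * a = a * r s) ∧
      (∀ s t : G, r (t * s⁻¹) * (C.α (t * s⁻¹) s : A)
          = r (s⁻¹ * t) * (C.α s (s⁻¹ * t) : A)) := by
  have single_comm_iff (t : G) (b : A) :
      cmul C r (Finsupp.single t b) = cmul C (Finsupp.single t b) r ↔
        ∀ g, r (g * t⁻¹) * b * (C.α (g * t⁻¹) t : A) = b * r (t⁻¹ * g) * (C.α t (t⁻¹ * g) : A) := by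
    simp only [Finsupp.ext_iff, C.cmul_single_right_apply, C.cmul_single_left_apply, hσ,
      RingEquiv.refl_apply]
  simp only [C.cmul_comm_iff_forall_single, single_comm_iff]
  constructor
  · intro h
    refine ⟨fun s a => by simpa [C.unit_right, C.unit_left] using h 1 a s, fun s t => ?_⟩
    simpa using h s 1 t
  · rintro ⟨hcenter, hcocycle⟩ t b g
    calc r (g * t⁻¹) * b * (C.α (g * t⁻¹) t : A)
        = b * (r (g * t⁻¹) * (C.α (g * t⁻¹) t : A)) := by rw [← mul_assoc, hcenter]
      _ = b * r (t⁻¹ * g) * (C.α t (t⁻¹ * g) : A) := by rw [hcocycle, mul_assoc]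
end

section
/- If G is abelian and α is symmetric (α(x,y) = α(y,x) for all x,y), then the center of A ⋊_α^σ G is { ∑_g r_g g̅ : r_s σ_s(a) = a r_s for all a ∈ A, and r_s ∈ A^G for all s ∈ G }, where A^G = {a ∈ A : σ_s(a) = a for all s ∈ G}. -/
variable {A : Type*} [Ring A] {G : Type*} [Group G]

set_option linter.unusedSectionVars false

lemma sigma_one (C : CrossedSystem A G) (a : A) : C.σ 1 a = a := by
  have h := C.compat 1 1 a
  simp [C.unit_left] at h
  exact h

lemma cmul_single_left (C : CrossedSystem A G) (s : G) (a : A) (g : G →₀ A) :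
    cmul C (Finsupp.single s a) g =
      g.sum fun t b => Finsupp.single (s * t) (a * C.σ s b * (C.α s t : A)) := by
  unfold cmul
  rw [Finsupp.sum_single_index]
  simp [Finsupp.sum]

lemma cmul_single_right (C : CrossedSystem A G) (t : G) (b : A) (f : G →₀ A) :
    cmul C f (Finsupp.single t b) =
      f.sum fun s a => Finsupp.single (s * t) (a * C.σ s b * (C.α s t : A)) := by
  unfold cmul
  apply Finsupp.sum_congr
  intro s _
  rw [Finsupp.sum_single_index]
  simp

lemma sum_single_apply (f : G →₀ A) (φ : G → G) (hφ : Function.Injective φ)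
    (c : G → A → A) (hc : ∀ s, c s 0 = 0) (s : G) :
    (f.sum fun s' a => Finsupp.single (φ s') (c s' a)) (φ s) = c s (f s) := by
  classical
  rw [Finsupp.sum_apply]
  rw [Finsupp.sum]
  simp only [Finsupp.single_apply, hφ.eq_iff]
  rw [Finset.sum_ite_eq' f.support s (fun s' => c s' (f s'))]
  by_cases h : s ∈ f.support
  · rw [if_pos h]
  · rw [if_neg h, Finsupp.notMem_support_iff.mp h, hc]

theorem stmt_6 (C : CrossedSystem A G)
    (hG : ∀ x y : G, x * y = y * x)
    (hα : ∀ x y : G, C.α x y = C.α y x) (r : G →₀ A) :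
    (∀ x : G →₀ A, cmul C r x = cmul C x r) ↔
      ∀ s : G, (∀ a : A, r s * C.σ s a = a * r s) ∧ (∀ t : G, C.σ t (r s) = r s) := by
  constructor
  · intro h s
    constructor
    · intro a
      have h1 := h (cemb a)
      unfold cemb at h1
      rw [cmul_single_right, cmul_single_left] at h1
      have h2 := congrArg (fun f : G →₀ A => f s) h1
      have lhs : (r.sum fun s' a' => Finsupp.single (s' * 1) (a' * C.σ s' a * (C.α s' 1 : A))) s
          = r s * C.σ s a := by
        have := sum_single_apply r (fun s' => s' * 1) (fun x y hxy => by simpa using hxy)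
          (fun s' a' => a' * C.σ s' a * (C.α s' 1 : A)) (by intro s'; simp) s
        simpa [C.unit_right] using this
      have rhs : (r.sum fun t b => Finsupp.single (1 * t) (a * C.σ 1 b * (C.α 1 t : A))) s
          = a * r s := by
        have := sum_single_apply r (fun t => 1 * t) (fun x y hxy => by simpa using hxy)
          (fun t b => a * C.σ 1 b * (C.α 1 t : A)) (by intro t; simp) s
        simpa [C.unit_left, sigma_one] using this
      rw [lhs, rhs] at h2
      exact h2
    · intro t
      have h1 := h (Finsupp.single t 1)
      rw [cmul_single_right, cmul_single_left] at h1
      have h2 := congrArg (fun f : G →₀ A => f (s * t)) h1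
      have lhs : (r.sum fun s' a' => Finsupp.single (s' * t) (a' * C.σ s' 1 * (C.α s' t : A))) (s * t)
          = r s * (C.α s t : A) := by
        have := sum_single_apply r (fun s' => s' * t) (mul_left_injective t)
          (fun s' a' => a' * C.σ s' 1 * (C.α s' t : A)) (by intro s'; simp) s
        simpa using this
      have rhs : (r.sum fun s' a' => Finsupp.single (t * s') ((1:A) * C.σ t a' * (C.α t s' : A))) (s * t)
          = C.σ t (r s) * (C.α t s : A) := by
        have := sum_single_apply r (fun s' => t * s') (mul_right_injective t)
          (fun s' a' => (1:A) * C.σ t a' * (C.α t s' : A)) (by intro s'; simp) s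
        rw [hG s t]
        simpa using this
      rw [lhs, rhs, hα t s] at h2
      have := congrArg (fun x : A => x * ((C.α s t)⁻¹ : Aˣ)) h2
      simpa [mul_assoc, Units.mul_inv_cancel_left] using this.symm
  · intro h x
    unfold cmul
    rw [Finsupp.sum_comm x r]
    apply Finsupp.sum_congr
    intro s hs
    apply Finsupp.sum_congr
    intro t ht
    rw [hG t s, hα t s, (h s).2 t]
    congr 1
    rw [← (h s).1 (x t)]
end
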